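/- Let A2 ∈ ℂ^{n×n}, B2 ∈ ℂ^{n×m}, and let N_{0i} ∈ ℂ^{n×m}, D_{0i} ∈ ℂ^{m×m} (i = 0,…,ω) satisfy s·N_0^#(s) - A2·N_0(s) = B2·D_0(s) for all s ∈ ℂ, where N_0(s) := Σ_i N_{0i}s^i and N_0^#(s) := Σ_i N_{0i}^# s^i (similarly for D_0). Let F2 ∈ ℂ^{p×p} and Z1, Z2 ∈ ℂ^{m×p} be arbitrary. Define X1 := Σ_{i even} N_{0i}·Z1·(F2^#F2)^{i/2} + Σ_{i odd} N_{0i}·Z1^#·F2·(F2^#F2)^{(i-1)/2} and Y1 analogously with D_{0i} in place of N_{0i}; define X2 := Σ_{i even} N_{0i}^#·Z2·(F2^#F2)^{i/2} + Σ_{i odd} N_{0i}^#·Z2^#·F2·(F2^#F2)^{(i-1)/2} and Y2 analogously with D_{0i}^# in place of N_{0i}^# (sums over i = 0,…,ω). Then A2^#X1^# + B2^#Y1^# = X1·F2^# and A2^#X2 + B2^#Y2 = X2^#·F2; that is, (X1, Y1) and (X2, Y2) solve the anti-preserving equations for the antilinear system. -/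
import Mathlib

open Matrix Finset

/-- Entrywise complex conjugate of a complex matrix. -/
noncomputable def mconj {n m : Type*} (M : Matrix n m ℂ) : Matrix n m ℂ :=
  M.map (starRingEnd ℂ)

/-- Evaluation of the polynomial matrix with coefficients `N 0, …, N ω` at `s`. -/
noncomputable def polyEval {n m : Type*} (ω : ℕ) (N : ℕ → Matrix n m ℂ) (s : ℂ) :
    Matrix n m ℂ :=
  ∑ i ∈ range (ω + 1), s ^ i • N i

lemma mconj_mconj {a b : Type*} (M : Matrix a b ℂ) : mconj (mconj M) = M := by
  ext i j; simp [mconj]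

lemma mconj_mul {a b c : Type*} [Fintype b] (M : Matrix a b ℂ) (N : Matrix b c ℂ) :
    mconj (M * N) = mconj M * mconj N :=
  Matrix.map_mul

lemma mconj_add {a b : Type*} (M N : Matrix a b ℂ) : mconj (M + N) = mconj M + mconj N := by
  ext i j; simp [mconj]

lemma mconj_zero {a b : Type*} : mconj (0 : Matrix a b ℂ) = 0 := by
  ext i j; simp [mconj]

lemma mconj_one {a : Type*} [DecidableEq a] : mconj (1 : Matrix a a ℂ) = 1 := by
  ext i j; simp [mconj, Matrix.one_apply, apply_ite (starRingEnd ℂ)]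

lemma mconj_pow {a : Type*} [Fintype a] [DecidableEq a] (M : Matrix a a ℂ) (k : ℕ) :
    mconj (M ^ k) = (mconj M) ^ k := by
  induction k with
  | zero => simp [mconj_one]
  | succ k ih => rw [pow_succ, mconj_mul, ih, pow_succ]

lemma mconj_sum {a b : Type*} {ι : Type*} (s : Finset ι) (f : ι → Matrix a b ℂ) :
    mconj (∑ i ∈ s, f i) = ∑ i ∈ s, mconj (f i) := by
  ext x y
  simp [mconj, Matrix.sum_apply]

lemma swap_pow {M : Type*} [Monoid M] (a b : M) (k : ℕ) :
    a * (b * a) ^ k = (a * b) ^ k * a := by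
  induction k with
  | zero => simp
  | succ k ih =>
    rw [pow_succ, ← mul_assoc, ih, pow_succ]
    group

lemma poly_coeff_zero (k : ℕ) (c : ℕ → ℂ)
    (h : ∀ s : ℂ, ∑ i ∈ Finset.range k, s ^ i * c i = 0) :
    ∀ i, i < k → c i = 0 := by
  intro i hi
  have hP : (∑ j ∈ Finset.range k, Polynomial.C (c j) * Polynomial.X ^ j : Polynomial ℂ) = 0 := by
    apply Polynomial.funext
    intro x
    rw [Polynomial.eval_finset_sum, Polynomial.eval_zero, ← h x]
    refine Finset.sum_congr rfl fun j _ => ?_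
    rw [Polynomial.eval_mul, Polynomial.eval_C, Polynomial.eval_pow, Polynomial.eval_X, mul_comm]
  have h2 := congrArg (fun P : Polynomial ℂ => P.coeff i) hP
  simp only [Polynomial.finset_sum_coeff, Polynomial.coeff_C_mul, Polynomial.coeff_X_pow,
    Polynomial.coeff_zero, mul_ite, mul_one, mul_zero] at h2
  rwa [Finset.sum_ite_eq (Finset.range k) i c, if_pos (Finset.mem_range.mpr hi)] at h2

/-- the parameter sequence -/
noncomputable def Wfun {m p : ℕ} (Z : Matrix (Fin m) (Fin p) ℂ)
    (F2 : Matrix (Fin p) (Fin p) ℂ) (i : ℕ) : Matrix (Fin m) (Fin p) ℂ :=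
  if Even i then Z * (mconj F2 * F2) ^ (i / 2)
  else mconj Z * F2 * (mconj F2 * F2) ^ ((i - 1) / 2)

lemma Wfun_succ_mconj {m p : ℕ} (Z : Matrix (Fin m) (Fin p) ℂ)
    (F2 : Matrix (Fin p) (Fin p) ℂ) (i : ℕ) :
    mconj (Wfun Z F2 (i + 1)) = Wfun Z F2 i * mconj F2 := by
  have hC : mconj (mconj F2 * F2) = F2 * mconj F2 := by
    rw [mconj_mul, mconj_mconj]
  rcases Nat.even_or_odd i with he | ho
  · obtain ⟨k, hk⟩ := id he
    have h1 : ¬ Even (i + 1) := by simp [Nat.even_add_one, he]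
    have h2 : (i + 1 - 1) / 2 = k := by omega
    have h3 : i / 2 = k := by omega
    simp only [Wfun, if_pos he, if_neg h1, h2, h3]
    rw [mconj_mul, mconj_mul, mconj_mconj, mconj_pow, hC]
    rw [Matrix.mul_assoc, swap_pow, ← Matrix.mul_assoc]
  · have h1' : ¬ Even i := Nat.not_even_iff_odd.mpr ho
    have h1 : Even (i + 1) := by simp [Nat.even_add_one, h1']
    obtain ⟨k, hk⟩ := id ho
    have h2 : (i + 1) / 2 = k + 1 := by omega
    have h3 : (i - 1) / 2 = k := by omega
    simp only [Wfun, if_pos h1, if_neg h1', h2, h3]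
    rw [mconj_mul, mconj_pow, hC]
    have hh : F2 * (mconj F2 * F2) ^ k * mconj F2 = (F2 * mconj F2) ^ (k + 1) := by
      rw [swap_pow, mul_assoc, ← pow_succ]
    rw [← hh, ← Matrix.mul_assoc, ← Matrix.mul_assoc]

lemma Wfun_succ {m p : ℕ} (Z : Matrix (Fin m) (Fin p) ℂ)
    (F2 : Matrix (Fin p) (Fin p) ℂ) (i : ℕ) :
    Wfun Z F2 (i + 1) = mconj (Wfun Z F2 i) * F2 := by
  have := congrArg mconj (Wfun_succ_mconj Z F2 i)
  rwa [mconj_mconj, mconj_mul, mconj_mconj] at this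

/-- the explicit parametric formulas solve the anti-preserving
equations of the antilinear system. -/
theorem stmt_12 {n m p : ℕ} (ω : ℕ)
    (A2 : Matrix (Fin n) (Fin n) ℂ) (B2 : Matrix (Fin n) (Fin m) ℂ)
    (N0 : ℕ → Matrix (Fin n) (Fin m) ℂ) (D0 : ℕ → Matrix (Fin m) (Fin m) ℂ)
    (hfac : ∀ s : ℂ,
      s • polyEval ω (fun i => mconj (N0 i)) s - A2 * polyEval ω N0 s
        = B2 * polyEval ω D0 s)
    (F2 : Matrix (Fin p) (Fin p) ℂ) (Z1 Z2 : Matrix (Fin m) (Fin p) ℂ)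
    (X1 X2 : Matrix (Fin n) (Fin p) ℂ) (Y1 Y2 : Matrix (Fin m) (Fin p) ℂ)
    (hX1 : X1 = ∑ i ∈ range (ω + 1),
      if Even i then N0 i * Z1 * (mconj F2 * F2) ^ (i / 2)
      else N0 i * mconj Z1 * F2 * (mconj F2 * F2) ^ ((i - 1) / 2))
    (hY1 : Y1 = ∑ i ∈ range (ω + 1),
      if Even i then D0 i * Z1 * (mconj F2 * F2) ^ (i / 2)
      else D0 i * mconj Z1 * F2 * (mconj F2 * F2) ^ ((i - 1) / 2))
    (hX2 : X2 = ∑ i ∈ range (ω + 1),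
      if Even i then mconj (N0 i) * Z2 * (mconj F2 * F2) ^ (i / 2)
      else mconj (N0 i) * mconj Z2 * F2 * (mconj F2 * F2) ^ ((i - 1) / 2))
    (hY2 : Y2 = ∑ i ∈ range (ω + 1),
      if Even i then mconj (D0 i) * Z2 * (mconj F2 * F2) ^ (i / 2)
      else mconj (D0 i) * mconj Z2 * F2 * (mconj F2 * F2) ^ ((i - 1) / 2)) :
    mconj A2 * mconj X1 + mconj B2 * mconj Y1 = X1 * mconj F2 ∧
      mconj A2 * X2 + mconj B2 * Y2 = mconj X2 * F2 := by
  -- rewrite the givens in terms of `Wfun`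
  have hX1' : X1 = ∑ i ∈ range (ω + 1), N0 i * Wfun Z1 F2 i := by
    rw [hX1]; refine Finset.sum_congr rfl fun i _ => ?_
    unfold Wfun; split_ifs <;> simp only [Matrix.mul_assoc]
  have hY1' : Y1 = ∑ i ∈ range (ω + 1), D0 i * Wfun Z1 F2 i := by
    rw [hY1]; refine Finset.sum_congr rfl fun i _ => ?_
    unfold Wfun; split_ifs <;> simp only [Matrix.mul_assoc]
  have hX2' : X2 = ∑ i ∈ range (ω + 1), mconj (N0 i) * Wfun Z2 F2 i := by
    rw [hX2]; refine Finset.sum_congr rfl fun i _ => ?_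
    unfold Wfun; split_ifs <;> simp only [Matrix.mul_assoc]
  have hY2' : Y2 = ∑ i ∈ range (ω + 1), mconj (D0 i) * Wfun Z2 F2 i := by
    rw [hY2]; refine Finset.sum_congr rfl fun i _ => ?_
    unfold Wfun; split_ifs <;> simp only [Matrix.mul_assoc]
  -- coefficient extraction
  have hm : ∀ s : ℂ, ∑ j ∈ range (ω + 2),
      s ^ j • ((if j = 0 then 0 else mconj (N0 (j - 1)))
        - (if j ≤ ω then A2 * N0 j + B2 * D0 j else 0)) = 0 := by
    intro s
    have h := hfac s
    have hsub : ∀ j : ℕ, s ^ j • ((if j = 0 then (0 : Matrix (Fin n) (Fin m) ℂ)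
          else mconj (N0 (j - 1)))
        - (if j ≤ ω then A2 * N0 j + B2 * D0 j else 0))
        = s ^ j • (if j = 0 then (0 : Matrix (Fin n) (Fin m) ℂ) else mconj (N0 (j - 1)))
          - s ^ j • (if j ≤ ω then A2 * N0 j + B2 * D0 j else 0) := fun j => smul_sub _ _ _
    simp only [hsub]
    rw [Finset.sum_sub_distrib]
    have e1 : ∑ j ∈ range (ω + 2), s ^ j • (if j = 0 then (0 : Matrix (Fin n) (Fin m) ℂ)
        else mconj (N0 (j - 1))) = s • polyEval ω (fun i => mconj (N0 i)) s := by
      rw [Finset.sum_range_succ']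
      simp only [Nat.add_sub_cancel, Nat.succ_ne_zero, if_neg, if_pos, smul_zero, add_zero,
        reduceIte]
      rw [polyEval, Finset.smul_sum]
      refine Finset.sum_congr rfl fun i _ => ?_
      rw [pow_succ, mul_comm, mul_smul]
    have e2 : ∑ j ∈ range (ω + 2), s ^ j • (if j ≤ ω then A2 * N0 j + B2 * D0 j else 0)
        = A2 * polyEval ω N0 s + B2 * polyEval ω D0 s := by
      rw [Finset.sum_range_succ, if_neg (by omega), smul_zero, add_zero]
      rw [polyEval, polyEval, Matrix.mul_sum, Matrix.mul_sum, ← Finset.sum_add_distrib]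
      refine Finset.sum_congr rfl fun i hi => ?_
      rw [if_pos (by simpa using Nat.lt_succ_iff.mp (Finset.mem_range.mp hi))]
      rw [smul_add, Matrix.mul_smul, Matrix.mul_smul]
    rw [e1, e2, sub_eq_zero]
    rw [sub_eq_iff_eq_add] at h
    rw [h, add_comm]
  have key : ∀ j, j < ω + 2 →
      ((if j = 0 then (0 : Matrix (Fin n) (Fin m) ℂ) else mconj (N0 (j - 1)))
        - (if j ≤ ω then A2 * N0 j + B2 * D0 j else 0)) = 0 := by
    intro j hj
    ext a b
    have hent := poly_coeff_zero (ω + 2)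
      (fun j => ((if j = 0 then (0 : Matrix (Fin n) (Fin m) ℂ) else mconj (N0 (j - 1)))
        - (if j ≤ ω then A2 * N0 j + B2 * D0 j else 0)) a b)
      (fun s => by
        have := congrFun (congrFun (hm s) a) b
        simpa [Matrix.sum_apply, Matrix.smul_apply, smul_eq_mul] using this) j hj
    simpa using hent
  have hc0 : A2 * N0 0 + B2 * D0 0 = 0 := by
    have := key 0 (by omega)
    rw [if_pos rfl, if_pos (Nat.zero_le ω), zero_sub, neg_eq_zero] at this
    exact this
  have hstep : ∀ i, i < ω → A2 * N0 (i + 1) + B2 * D0 (i + 1) = mconj (N0 i) := by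
    intro i hi
    have := key (i + 1) (by omega)
    rw [if_neg (by omega), if_pos (by omega), sub_eq_zero] at this
    simpa using this.symm
  have htop : N0 ω = 0 := by
    have := key (ω + 1) (by omega)
    rw [if_neg (by omega), if_neg (by omega), sub_zero] at this
    have := congrArg mconj this
    rwa [mconj_mconj, mconj_zero] at this
  constructor
  · -- first equation
    have e1 : A2 * X1 + B2 * Y1 = ∑ i ∈ range ω, mconj (N0 i) * Wfun Z1 F2 (i + 1) := by
      rw [hX1', hY1', Matrix.mul_sum, Matrix.mul_sum, ← Finset.sum_add_distrib]
      have : ∀ i, A2 * (N0 i * Wfun Z1 F2 i) + B2 * (D0 i * Wfun Z1 F2 i)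
          = (A2 * N0 i + B2 * D0 i) * Wfun Z1 F2 i := fun i => by
        simp only [Matrix.add_mul, Matrix.mul_assoc]
      simp only [this]
      rw [Finset.sum_range_succ', hc0, Matrix.zero_mul, add_zero]
      refine Finset.sum_congr rfl fun i hi => ?_
      rw [hstep i (Finset.mem_range.mp hi)]
    calc mconj A2 * mconj X1 + mconj B2 * mconj Y1
        = mconj (A2 * X1 + B2 * Y1) := by rw [mconj_add, mconj_mul, mconj_mul]
      _ = ∑ i ∈ range ω, N0 i * (Wfun Z1 F2 i * mconj F2) := by
          rw [e1, mconj_sum]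
          refine Finset.sum_congr rfl fun i _ => ?_
          rw [mconj_mul, mconj_mconj, Wfun_succ_mconj]
      _ = X1 * mconj F2 := by
          rw [hX1', Matrix.sum_mul, Finset.sum_range_succ, htop, Matrix.zero_mul,
            Matrix.zero_mul, add_zero]
          exact Finset.sum_congr rfl fun i _ => (Matrix.mul_assoc _ _ _).symm
  · -- second equation
    have e2 : mconj A2 * X2 + mconj B2 * Y2
        = ∑ i ∈ range ω, N0 i * Wfun Z2 F2 (i + 1) := by
      rw [hX2', hY2', Matrix.mul_sum, Matrix.mul_sum, ← Finset.sum_add_distrib]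
      have : ∀ i, mconj A2 * (mconj (N0 i) * Wfun Z2 F2 i)
            + mconj B2 * (mconj (D0 i) * Wfun Z2 F2 i)
          = mconj (A2 * N0 i + B2 * D0 i) * Wfun Z2 F2 i := fun i => by
        simp only [mconj_add, mconj_mul, Matrix.add_mul, Matrix.mul_assoc]
      simp only [this]
      rw [Finset.sum_range_succ', hc0, mconj_zero, Matrix.zero_mul, add_zero]
      refine Finset.sum_congr rfl fun i hi => ?_
      rw [hstep i (Finset.mem_range.mp hi), mconj_mconj]
    rw [e2]
    calc ∑ i ∈ range ω, N0 i * Wfun Z2 F2 (i + 1)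
        = ∑ i ∈ range ω, N0 i * (mconj (Wfun Z2 F2 i) * F2) := by
          exact Finset.sum_congr rfl fun i _ => by rw [Wfun_succ]
      _ = mconj X2 * F2 := by
          rw [hX2', mconj_sum, Matrix.sum_mul, Finset.sum_range_succ, htop, mconj_zero,
            Matrix.zero_mul, mconj_zero, Matrix.zero_mul, add_zero]
          refine Finset.sum_congr rfl fun i _ => ?_
          rw [mconj_mul, mconj_mconj, Matrix.mul_assoc]
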